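/- arXiv:2103.07743 — 3 statements merged into one kernel-verified Lean document; each statement's English description precedes it below -/
import Mathlib

section
/- Let y(t) = ∑_{j=1}^{N} γ_j e^{2πα_j t} with γ_j, α_j ∈ ℝ \ {0}, P > 0, and define the modified Fourier coefficient c̃_k(y) = Re c_k(y) + (i/k) Im c_k(y) for k ∈ ℤ \ {0}. Then c̃_k(y) = ∑_{j=1}^{N} (A_j + iB_j)/(k² + C_j), i.e., c̃_k(y) = r_N(k²) where r_N(z) = ∑_{j=1}^{N} (A_j + iB_j)/(z + C_j), with A_j, B_j, C_j as in the rational representation of c_k(y). -/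
open Complex Finset

/-!
For a single exponential, `c_k(e^{2πα t}) = (e^{2παP} - 1) / (2π(αP - ik))
= e^{παP} sinh(παP) / π · (αP + ik) / (k² + α²P²)`, so by linearity
`c_k(y) = ∑ⱼ (Aⱼ + i k Bⱼ) / (k² + Cⱼ)` with `Aⱼ, Bⱼ, Cⱼ` real. Reading off real and imaginary
parts termwise and dividing the imaginary part by `k` gives `c̃_k(y) = ∑ⱼ (Aⱼ + i Bⱼ) / (k² + Cⱼ)`.
-/

/-- The `k`-th Fourier coefficient of `y` on the interval `[0, P]`. -/
noncomputable def expFourierCoeff (P : ℝ) (φ : ℝ → ℂ) (k : ℤ) : ℂ :=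
  (1 / (P : ℂ)) * ∫ t in (0:ℝ)..P,
    φ t * Complex.exp (-2 * (Real.pi : ℂ) * Complex.I * (k : ℂ) * (t : ℂ) / (P : ℂ))

/-- The modified `k`-th Fourier coefficient `c̃_k(y) = Re c_k(y) + (i/k) Im c_k(y)`. -/
noncomputable def expModFourierCoeff (P : ℝ) (φ : ℝ → ℂ) (k : ℤ) : ℂ :=
  ((expFourierCoeff P φ k).re : ℂ) + Complex.I / (k : ℂ) * ((expFourierCoeff P φ k).im : ℂ)

section
variable {P : ℝ} {k : ℤ}

theorem expFourierCoeff_const_mul (c : ℂ) (φ : ℝ → ℂ) :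
    expFourierCoeff P (fun t => c * φ t) k = c * expFourierCoeff P φ k := by
  simp only [expFourierCoeff, mul_assoc, intervalIntegral.integral_const_mul]
  ring

theorem expFourierCoeff_sum {ι : Type*} (s : Finset ι) (φ : ι → ℝ → ℂ)
    (hφ : ∀ j ∈ s, IntervalIntegrable (φ j) MeasureTheory.volume 0 P) :
    expFourierCoeff P (fun t => ∑ j ∈ s, φ j t) k = ∑ j ∈ s, expFourierCoeff P (φ j) k := by
  simp only [expFourierCoeff, ← mul_sum, sum_mul]
  rw [intervalIntegral.integral_finsetSum fun j hj =>
    (hφ j hj).mul_continuousOn (by fun_prop)]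

theorem expFourierCoeff_exp (a : ℝ) (hP : P ≠ 0) (hk : k ≠ 0) :
    expFourierCoeff P (fun t => exp (2 * Real.pi * a * t)) k
      = (Real.exp (a * Real.pi * P) * Real.sinh (Real.pi * a * P) / Real.pi : ℝ)
          * (a * P + I * k) / ((k : ℂ) ^ 2 + (a ^ 2 * P ^ 2 : ℝ)) := by
  have hPc : (P : ℂ) ≠ 0 := by exact_mod_cast hP
  have hπ : (Real.pi : ℂ) ≠ 0 := by exact_mod_cast Real.pi_ne_zero
  have hw : (a * P - I * k : ℂ) ≠ 0 := fun h => by simpa [hk] using congrArg im h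
  have hw' : (a * P + I * k : ℂ) ≠ 0 := fun h => by simpa [hk] using congrArg im h
  have hnorm : (k : ℂ) ^ 2 + (a ^ 2 * P ^ 2 : ℝ) = (a * P - I * k) * (a * P + I * k) := by
    push_cast
    ring_nf
    rw [I_sq]
    ring
  set c : ℂ := 2 * Real.pi * (a * P - I * k) / P with hc_def
  have hc : c ≠ 0 := div_ne_zero (mul_ne_zero (mul_ne_zero two_ne_zero hπ) hw) hPc
  have hexp_mul : ∀ t : ℝ, exp (2 * Real.pi * a * t) * exp (-2 * Real.pi * I * k * t / P)
      = exp (c * t) := fun t => by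
    rw [← exp_add, hc_def]
    congr 1
    field_simp
    ring
  have hint : ∫ t in (0:ℝ)..P, exp (2 * Real.pi * a * t) * exp (-2 * Real.pi * I * k * t / P)
      = (exp (c * P) - 1) / c := by
    simp_rw [hexp_mul, integral_exp_mul_complex hc, ofReal_zero, mul_zero, exp_zero]
  -- `k` is an integer, so the oscillating factor `e^{-2πik}` of `e^{cP}` is `1`
  have hcP : exp (c * P) = Real.exp (2 * Real.pi * a * P) := by
    have hcP_eq : c * P = (2 * Real.pi * a * P : ℝ) + (-k : ℤ) * (2 * Real.pi * I) := by
      rw [hc_def]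
      push_cast
      field_simp
      ring
    rw [hcP_eq, exp_add, exp_int_mul_two_pi_mul_I, mul_one, ofReal_exp]
  have hsinh : Real.exp (2 * Real.pi * a * P) - 1
      = 2 * Real.exp (a * Real.pi * P) * Real.sinh (Real.pi * a * P) := by
    rw [Real.sinh_eq, Real.exp_neg, show a * Real.pi * P = Real.pi * a * P by ring, mul_assoc 2,
      mul_assoc 2, two_mul, Real.exp_add]
    field_simp
  rw [expFourierCoeff, hint, hcP, hnorm, mul_div_mul_right _ _ hw', hc_def, ← ofReal_one,
    ← ofReal_sub, hsinh]
  push_cast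
  field_simp

theorem expModFourierCoeff_of_eq_sum {ι : Type*} (s : Finset ι) {φ : ℝ → ℂ}
    (A B C : ι → ℝ) (hk : k ≠ 0)
    (h : expFourierCoeff P φ k = ∑ j ∈ s, ((A j : ℂ) + I * (k * B j)) / ((k : ℂ) ^ 2 + (C j : ℂ))) :
    expModFourierCoeff P φ k = ∑ j ∈ s, ((A j : ℂ) + I * (B j : ℂ)) / ((k : ℂ) ^ 2 + (C j : ℂ)) := by
  have hterm : ∀ j, ((A j : ℂ) + I * (k * B j)) / ((k : ℂ) ^ 2 + (C j : ℂ))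
      = ((A j / (k ^ 2 + C j) : ℝ) : ℂ) + I * (k * (B j / (k ^ 2 + C j) : ℝ)) := by
    intro j
    push_cast
    ring
  have hk' : (k : ℂ) ≠ 0 := by exact_mod_cast hk
  simp only [expModFourierCoeff, h, hterm, re_sum, im_sum, add_re, add_im, mul_re, mul_im,
    ofReal_re, ofReal_im, I_re, I_im, intCast_re, intCast_im]
  push_cast
  rw [mul_sum, ← sum_add_distrib]
  refine sum_congr rfl fun j _ => ?_
  field_simp
  ring

end

theorem modFourierCoeff_real_proper_exp_sum_general (N : ℕ) (γ α : Fin N → ℝ)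
    (P : ℝ) (hP : 0 < P) (k : ℤ) (hk : k ≠ 0) :
    expModFourierCoeff P
        (fun t => ∑ j : Fin N,
          (γ j : ℂ) * Complex.exp (2 * (Real.pi : ℂ) * (α j : ℂ) * (t : ℂ))) k
      = ∑ j : Fin N,
          (((γ j * P * α j / Real.pi * Real.exp (α j * Real.pi * P)
                * Real.sinh (Real.pi * α j * P) : ℝ) : ℂ)
            + Complex.I * ((γ j / Real.pi * Real.exp (α j * Real.pi * P)
                  * Real.sinh (Real.pi * α j * P) : ℝ) : ℂ))
          / ((k : ℂ) ^ 2 + ((α j ^ 2 * P ^ 2 : ℝ) : ℂ)) := by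
  apply expModFourierCoeff_of_eq_sum _ _ _ _ hk
  rw [expFourierCoeff_sum (φ := fun j t => (γ j : ℂ) * exp (2 * Real.pi * α j * t)) univ
    fun j _ => (by fun_prop : Continuous _).intervalIntegrable 0 P]
  refine sum_congr rfl fun j _ => ?_
  rw [expFourierCoeff_const_mul, expFourierCoeff_exp (α j) hP.ne' hk]
  push_cast
  ring

/-- For a real proper exponential sum `y(t) = ∑_j γ_j e^{2πα_j t}` and `k ≠ 0`, the modified
Fourier coefficient satisfies `c̃_k(y) = ∑_j (A_j + iB_j)/(k² + C_j)`, i.e. it is the value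
at `z = k²` of the rational function `r_N(z) = ∑_j (A_j + iB_j)/(z + C_j)`. -/
theorem modFourierCoeff_real_proper_exp_sum (N : ℕ) (γ α : Fin N → ℝ)
    (hγ : ∀ j, γ j ≠ 0) (hα : ∀ j, α j ≠ 0) (P : ℝ) (hP : 0 < P) (k : ℤ) (hk : k ≠ 0) :
    expModFourierCoeff P
        (fun t => ∑ j : Fin N,
          (γ j : ℂ) * Complex.exp (2 * (Real.pi : ℂ) * (α j : ℂ) * (t : ℂ))) k
      = ∑ j : Fin N,
          (((γ j * P * α j / Real.pi * Real.exp (α j * Real.pi * P)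
                * Real.sinh (Real.pi * α j * P) : ℝ) : ℂ)
            + Complex.I * ((γ j / Real.pi * Real.exp (α j * Real.pi * P)
                  * Real.sinh (Real.pi * α j * P) : ℝ) : ℂ))
          / ((k : ℂ) ^ 2 + ((α j ^ 2 * P ^ 2 : ℝ) : ℂ)) :=
  modFourierCoeff_real_proper_exp_sum_general N γ α P hP k hk
end

section
/- Let y_j(t) = (∑_{m=0}^{n_j} γ_{j,m} t^m) e^{2πλ_j t} with -iλ_j P ∉ ℤ, P > 0. Then for all k ∈ ℤ, c_k(y_j) = ∑_{ℓ=0}^{n_j} A_{j,ℓ}/(k - C_j)^{ℓ+1}, where C_j = -iλ_j P and A_{j,ℓ} = (ℓ!/(2πi)^{ℓ+1}) · (γ_{j,ℓ} P^ℓ (1 - e^{2πλ_j P}) - e^{2πλ_j P} ∑_{m=ℓ+1}^{n_j} P^m C(m,ℓ) γ_{j,m}). -/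
/-! Repeated integration by parts gives, for a polynomial `p` and `a ≠ 0`,
`∫₀^P p(t) e^{at} dt = ∑_l (p⁽ˡ⁾(0) - e^{aP} p⁽ˡ⁾(P)) / (-a)^{l+1}`.
The Fourier coefficient is such an integral with `a = -2πi(k - C)/P`, and `e^{aP} = e^{2πλP}`
because `k` is an integer. For `p = ∑ γ_m t^m` one has `p⁽ˡ⁾(0) = l! γ_l` and
`P^l p⁽ˡ⁾(P) = l! ∑_m C(m,l) P^m γ_m`, which after splitting off `m = l` gives `A_l`. -/

open Complex Finset

open Polynomial intervalIntegral
open scoped Nat Real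

theorem Finset.sum_range_succ_eq_add_sum_Icc {M : Type*} [AddCommMonoid M] {f : ℕ → M}
    {l n : ℕ} (hl : l ≤ n) (hf : ∀ m < l, f m = 0) :
    ∑ m ∈ range (n + 1), f m = f l + ∑ m ∈ Icc (l + 1) n, f m := by
  rw [← sum_range_add_sum_Ico f (by omega : l ≤ n + 1),
    sum_eq_zero fun m hm => hf m (mem_range.1 hm), zero_add,
    sum_eq_sum_Ico_succ_bot (by omega), Ico_add_one_right_eq_Icc]

namespace Polynomial

variable {R : Type*} [CommSemiring R]

theorem eval_zero_iterate_derivative (p : R[X]) (l : ℕ) :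
    (derivative^[l] p).eval 0 = l ! * p.coeff l := by
  rw [← coeff_zero_eq_eval_zero, coeff_iterate_derivative, zero_add, Nat.descFactorial_self,
    nsmul_eq_mul]

theorem pow_mul_eval_iterate_derivative_X_pow (x : R) (l m : ℕ) :
    x ^ l * (derivative^[l] (X ^ m : R[X])).eval x = l ! * (m.choose l * x ^ m) := by
  rw [iterate_derivative_X_pow_eq_smul, eval_smul, eval_X_pow,
    Nat.descFactorial_eq_factorial_mul_choose]
  rcases le_or_gt l m with hlm | hml
  · rw [← pow_sub_mul_pow x hlm, smul_eq_mul]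
    push_cast
    ring
  · simp [Nat.choose_eq_zero_of_lt hml]

theorem pow_mul_eval_iterate_derivative_sum_C_mul_X_pow (γ : ℕ → R) (n l : ℕ) (x : R) :
    x ^ l * (derivative^[l] (∑ m ∈ range n, C (γ m) * X ^ m)).eval x =
      l ! * ∑ m ∈ range n, x ^ m * m.choose l * γ m := by
  simp only [iterate_derivative_sum, iterate_derivative_C_mul, eval_finsetSum, eval_mul, eval_C,
    mul_sum]
  refine sum_congr rfl fun m _ => ?_
  rw [mul_left_comm, pow_mul_eval_iterate_derivative_X_pow]
  ring

theorem coeff_sum_C_mul_X_pow (γ : ℕ → R) {n l : ℕ} (hl : l < n) :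
    (∑ m ∈ range n, C (γ m) * X ^ m).coeff l = γ l := by
  simp [finsetSum_coeff, hl]

theorem natDegree_sum_C_mul_X_pow_lt (γ : ℕ → R) (n : ℕ) :
    (∑ m ∈ range (n + 1), C (γ m) * X ^ m).natDegree < n + 1 :=
  Nat.lt_succ_of_le <| natDegree_sum_le_of_forall_le _ _ fun _ hm =>
    (natDegree_C_mul_X_pow_le _ _).trans (Nat.lt_succ_iff.1 (mem_range.1 hm))

end Polynomial

theorem integral_eval_mul_cexp (p : ℂ[X]) {a : ℂ} (ha : a ≠ 0) (P : ℝ) :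
    ∫ t in (0:ℝ)..P, p.eval (t : ℂ) * cexp (a * t) =
      (p.eval 0 - cexp (a * P) * p.eval (P : ℂ)) / -a
        + (∫ t in (0:ℝ)..P, (derivative p).eval (t : ℂ) * cexp (a * t)) / -a := by
  have hu (t : ℝ) :
      HasDerivAt (fun s : ℝ => p.eval (s : ℂ)) ((derivative p).eval (t : ℂ)) t :=
    (p.hasDerivAt t).comp_ofReal
  have hv (t : ℝ) : HasDerivAt (fun s : ℝ => cexp (a * s) / a) (cexp (a * t)) t := by
    simpa [ha] using (((hasDerivAt_id (t : ℂ)).const_mul a).cexp.div_const a).comp_ofReal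
  have hparts := integral_mul_deriv_eq_deriv_mul (a := 0) (b := P) (fun t _ => hu t)
    (fun t _ => hv t) (by apply Continuous.intervalIntegrable; fun_prop)
    (by apply Continuous.intervalIntegrable; fun_prop)
  simp_rw [← mul_div_assoc, intervalIntegral.integral_div, ofReal_zero, mul_zero, exp_zero,
    mul_one] at hparts
  rw [hparts]
  field_simp
  ring

theorem integral_eval_mul_cexp_eq_sum (p : ℂ[X]) {a : ℂ} (ha : a ≠ 0) (P : ℝ) {N : ℕ}
    (hN : derivative^[N] p = 0) :
    ∫ t in (0:ℝ)..P, p.eval (t : ℂ) * cexp (a * t) =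
      ∑ l ∈ range N,
        ((derivative^[l] p).eval 0 - cexp (a * P) * (derivative^[l] p).eval (P : ℂ))
          / (-a) ^ (l + 1) := by
  induction N generalizing p with
  | zero => simp [show p = 0 from hN]
  | succ N ih =>
    rw [integral_eval_mul_cexp p ha, ih (derivative p) hN, sum_range_succ', sum_div, add_comm]
    simp only [Function.iterate_succ_apply, Function.iterate_zero_apply]
    congr 1
    · exact sum_congr rfl fun l _ => by ring
    · ring

theorem expFourierCoeff_eval_mul_cexp (p : ℂ[X]) {N : ℕ} (hN : derivative^[N] p = 0) (lam : ℂ)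
    {P : ℝ} (hP : P ≠ 0) (k : ℤ) (hk : -I * lam * P ≠ k) :
    expFourierCoeff P (fun t => p.eval (t : ℂ) * cexp (2 * π * lam * t)) k =
      ∑ l ∈ range N, (P : ℂ) ^ l *
        ((derivative^[l] p).eval 0 - cexp (2 * π * lam * P) * (derivative^[l] p).eval (P : ℂ))
          / (2 * π * I * (k - (-I * lam * P))) ^ (l + 1) := by
  set x : ℂ := (k : ℂ) - (-I * lam * P)
  set a : ℂ := -(2 * π * I * x) / P with ha_def
  have hP' : (P : ℂ) ≠ 0 := ofReal_ne_zero.2 hP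
  have hx : x ≠ 0 := sub_ne_zero.2 hk.symm
  have ha : a ≠ 0 := by simp [a, hx, hP', Real.pi_ne_zero, I_ne_zero]
  have hintegrand (t : ℝ) :
      p.eval (t : ℂ) * cexp (2 * π * lam * t) * cexp (-2 * π * I * k * t / P)
        = p.eval (t : ℂ) * cexp (a * t) := by
    rw [mul_assoc, ← exp_add]
    congr 2
    simp only [a, x]
    field_simp
    linear_combination t * lam * P * I_sq
  have hperiod : cexp (a * P) = cexp (2 * π * lam * P) := by
    have : a * P = 2 * π * lam * P + (-k : ℤ) * (2 * π * I) := by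
      simp only [a, x]
      field_simp
      push_cast
      linear_combination -lam * P * I_sq
    rw [this, exp_add, exp_int_mul_two_pi_mul_I, mul_one]
  have hna : -a = 2 * π * I * x / P := by rw [ha_def]; ring
  unfold expFourierCoeff
  rw [integral_congr fun t _ => hintegrand t, integral_eval_mul_cexp_eq_sum p ha P hN, hperiod,
    mul_sum]
  refine sum_congr rfl fun l _ => ?_
  rw [hna, div_pow]
  field_simp
  ring

/-- For an extended exponential term `y_j(t) = (∑_{m≤n} γ_m t^m)e^{2πλt}` with
`-iλP ∉ ℤ`, the Fourier coefficients satisfy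
`c_k(y_j) = ∑_{ℓ=0}^n A_ℓ/(k - C)^{ℓ+1}` with `C = -iλP` and
`A_ℓ = (ℓ!/(2πi)^{ℓ+1})(γ_ℓ P^ℓ(1-e^{2πλP}) - e^{2πλP} ∑_{m=ℓ+1}^n P^m C(m,ℓ) γ_m)`. -/
theorem fourierCoeff_extended_term_rational (n : ℕ) (γ : ℕ → ℂ) (lam : ℂ)
    (P : ℝ) (hP : 0 < P)
    (hlam : ∀ z : ℤ, -Complex.I * lam * (P : ℂ) ≠ (z : ℂ)) (k : ℤ) :
    expFourierCoeff P
        (fun t => (∑ m ∈ Finset.range (n + 1), γ m * (t : ℂ) ^ m)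
          * Complex.exp (2 * (Real.pi : ℂ) * lam * (t : ℂ))) k
      = ∑ l ∈ Finset.range (n + 1),
          ((Nat.factorial l : ℂ) / (2 * (Real.pi : ℂ) * Complex.I) ^ (l + 1)
              * (γ l * (P : ℂ) ^ l
                    * (1 - Complex.exp (2 * (Real.pi : ℂ) * lam * (P : ℂ)))
                  - Complex.exp (2 * (Real.pi : ℂ) * lam * (P : ℂ))
                    * ∑ m ∈ Finset.Icc (l + 1) n,
                        (P : ℂ) ^ m * (Nat.choose m l : ℂ) * γ m))
            / ((k : ℂ) - (-Complex.I * lam * (P : ℂ))) ^ (l + 1) := by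
  set q : ℂ[X] := ∑ m ∈ range (n + 1), C (γ m) * X ^ m
  have hq :
      (fun t : ℝ => (∑ m ∈ range (n + 1), γ m * (t : ℂ) ^ m) * cexp (2 * π * lam * t)) =
        fun t : ℝ => q.eval (t : ℂ) * cexp (2 * π * lam * t) := by
    simp [q, eval_finsetSum]
  rw [hq, expFourierCoeff_eval_mul_cexp q (iterate_derivative_eq_zero
    (natDegree_sum_C_mul_X_pow_lt γ n)) lam hP.ne' k (hlam k)]
  refine sum_congr rfl fun l hl => ?_
  have hln : l ≤ n := Nat.lt_succ_iff.1 (mem_range.1 hl)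
  rw [eval_zero_iterate_derivative, coeff_sum_C_mul_X_pow γ (mem_range.1 hl), mul_sub,
    mul_left_comm _ _ ((derivative^[l] q).eval _),
    pow_mul_eval_iterate_derivative_sum_C_mul_X_pow,
    sum_range_succ_eq_add_sum_Icc hln fun m hm => by simp [Nat.choose_eq_zero_of_lt hm],
    Nat.choose_self, mul_pow]
  field_simp
  ring
end

section
/- Let y_j(t) = (∑_{m=0}^{n_j} γ_{j,m} t^m) e^{2πλ_j t} with -iλ_j P = k_j ∈ ℤ, P > 0. Then c_{k_j}(y_j) = ∑_{ℓ=0}^{n_j} γ_{j,ℓ} P^ℓ/(ℓ+1), and for every k ∈ ℤ with k ≠ k_j, c_k(y_j) = ∑_{ℓ=0}^{n_j-1} A*_{j,ℓ}/(k - k_j)^{ℓ+1}, where A*_{j,ℓ} = -(ℓ!/(2πi)^{ℓ+1}) ∑_{m=ℓ+1}^{n_j} P^m C(m,ℓ) γ_{j,m}. -/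
open Complex Finset

/-! Multiplying `y_j` by the Fourier character `e^{-2πikt/P}` gives `∑ γ_m t^m e^{-dt}` with
`d = 2πi(k - k_j)/P`. For `k = k_j` these are the moments `∫₀ᴾ t^m = P^{m+1}/(m+1)`.
Otherwise `t^m e^{-dt}` has the primitive `-e^{-dt} ∑_{ℓ ≤ m} m!/(m-ℓ)! · t^{m-ℓ}/d^{ℓ+1}`;
since `e^{-dP} = 1` the constant (`ℓ = m`) terms cancel between `0` and `P`, and the remaining
terms, rewritten with `m!/(m-ℓ)! = ℓ! C(m,ℓ)` and summed over `m` first, are the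
`A*_{j,ℓ}/(k-k_j)^{ℓ+1}`. -/

open scoped Real

lemma sum_range_sum_range_eq_sum_sum_Icc {M : Type*} [AddCommMonoid M] (n : ℕ) (f : ℕ → ℕ → M) :
    ∑ m ∈ range (n + 1), ∑ ℓ ∈ range m, f m ℓ = ∑ ℓ ∈ range n, ∑ m ∈ Icc (ℓ + 1) n, f m ℓ :=
  sum_comm' fun m ℓ => by simp only [mem_range, mem_Icc]; omega

namespace PowMulExp

variable {d : ℂ}

noncomputable def summand (d : ℂ) (m ℓ : ℕ) (t : ℂ) : ℂ :=
  m.descFactorial ℓ * t ^ (m - ℓ) / d ^ ℓ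

noncomputable def primitive (d : ℂ) (m : ℕ) (t : ℂ) : ℂ :=
  -(exp (-d * t) * ∑ ℓ ∈ range (m + 1), summand d m ℓ t) / d

lemma hasDerivAt_summand (hd : d ≠ 0) (m ℓ : ℕ) (t : ℂ) :
    HasDerivAt (summand d m ℓ) (d * summand d m (ℓ + 1) t) t := by
  have h := ((hasDerivAt_pow (m - ℓ) t).const_mul (m.descFactorial ℓ : ℂ)).div_const (d ^ ℓ)
  refine h.congr_deriv ?_
  simp only [summand, Nat.descFactorial_succ, Nat.sub_add_eq]
  push_cast
  field_simp
  ring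

lemma summand_self (m : ℕ) (t : ℂ) : summand d m m t = m.factorial / d ^ m := by
  simp [summand, Nat.descFactorial_self]

lemma hasDerivAt_primitive (hd : d ≠ 0) (m : ℕ) (t : ℂ) :
    HasDerivAt (primitive d m) (t ^ m * exp (-d * t)) t := by
  have hexp : HasDerivAt (fun s => exp (-d * s)) (-d * exp (-d * t)) t := by
    simpa [mul_comm] using ((hasDerivAt_id t).const_mul (-d)).cexp
  have hsum := HasDerivAt.fun_sum fun ℓ (_ : ℓ ∈ range (m + 1)) => hasDerivAt_summand hd m ℓ t
  refine ((hexp.mul hsum).neg.div_const d).congr_deriv ?_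
  -- telescopes to `summand 0 = t^m`, because `summand (m + 1) = 0`
  have htel : ∑ ℓ ∈ range (m + 1), (summand d m ℓ t - summand d m (ℓ + 1) t) = t ^ m := by
    rw [sum_range_sub']
    simp [summand]
  rw [← htel, sum_sub_distrib, ← mul_sum]
  field_simp
  ring

lemma integral_pow_mul_exp_of_exp_eq_one (hd : d ≠ 0) {P : ℝ} (hP : exp (-d * P) = 1) (m : ℕ) :
    ∫ t in (0 : ℝ)..P, (t : ℂ) ^ m * exp (-d * t) = -(∑ ℓ ∈ range m, summand d m ℓ P) / d := by
  have hcont : Continuous fun t : ℝ => (t : ℂ) ^ m * exp (-d * t) := by fun_prop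
  rw [intervalIntegral.integral_eq_sub_of_hasDerivAt
    (fun t _ => (hasDerivAt_primitive hd m t).comp_ofReal) (hcont.intervalIntegrable 0 P)]
  have hzero : ∑ ℓ ∈ range m, summand d m ℓ 0 = 0 :=
    sum_eq_zero fun ℓ hℓ => by simp [summand, Nat.sub_ne_zero_of_lt (mem_range.mp hℓ)]
  simp only [primitive, hP, ofReal_zero, mul_zero, exp_zero, one_mul,
    sum_range_succ, hzero, zero_add, summand_self]
  ring

lemma summand_div_div {P : ℂ} (hP : P ≠ 0) {m ℓ : ℕ} (hℓm : ℓ ≤ m) :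
    summand d m ℓ P / d / P = ℓ.factorial * m.choose ℓ * P ^ m / (d * P) ^ (ℓ + 1) := by
  rw [summand, Nat.descFactorial_eq_factorial_mul_choose, ← pow_sub_mul_pow P hℓm, mul_pow]
  push_cast
  field_simp
  ring

end PowMulExp

open PowMulExp

lemma integral_ofReal_pow (P : ℝ) (m : ℕ) :
    ∫ t in (0 : ℝ)..P, (t : ℂ) ^ m = (P : ℂ) ^ (m + 1) / (m + 1) := by
  simp_rw [← ofReal_pow]
  rw [intervalIntegral.integral_ofReal, integral_pow]
  push_cast
  ring

lemma expFourierCoeff_poly_mul_exp (n : ℕ) (γ : ℕ → ℂ) {lam : ℂ} {P : ℝ} (hP : P ≠ 0) {kj : ℤ}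
    (hlam : -I * lam * (P : ℂ) = (kj : ℂ)) (k : ℤ) :
    expFourierCoeff P
        (fun t => (∑ m ∈ range (n + 1), γ m * (t : ℂ) ^ m) * exp (2 * π * lam * t)) k
      = 1 / P * ∑ m ∈ range (n + 1), γ m *
          ∫ t in (0 : ℝ)..P, (t : ℂ) ^ m * exp (-(2 * π * I * (k - kj) / P) * t) := by
  have hPc : (P : ℂ) ≠ 0 := ofReal_ne_zero.mpr hP
  have hexp : ∀ t : ℝ, exp (2 * π * lam * t) * exp (-2 * π * I * k * t / P)
      = exp (-(2 * π * I * (k - kj) / P) * t) := by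
    intro t
    rw [← exp_add, ← hlam]
    congr 1
    field_simp
    linear_combination (t * lam * P) * I_mul_I
  unfold expFourierCoeff
  congr 1
  simp_rw [← intervalIntegral.integral_const_mul]
  rw [← intervalIntegral.integral_finsetSum fun m _ =>
    (by fun_prop : Continuous _).intervalIntegrable _ _]
  refine intervalIntegral.integral_congr fun t _ => ?_
  rw [sum_mul, sum_mul]
  refine Finset.sum_congr rfl fun m _ => ?_
  rw [← hexp]
  ring

/-- For a `P`-periodic extended exponential term `y_j(t) = (∑_{m≤n} γ_m t^m)e^{2πλt}`
with `-iλP = k_j ∈ ℤ`: `c_{k_j}(y_j) = ∑_{ℓ=0}^n γ_ℓ P^ℓ/(ℓ+1)`, and for `k ≠ k_j`,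
`c_k(y_j) = ∑_{ℓ=0}^{n-1} A*_ℓ/(k-k_j)^{ℓ+1}` with
`A*_ℓ = -(ℓ!/(2πi)^{ℓ+1}) ∑_{m=ℓ+1}^n P^m C(m,ℓ) γ_m`. -/
theorem fourierCoeff_extended_term_periodic (n : ℕ) (γ : ℕ → ℂ) (lam : ℂ)
    (P : ℝ) (hP : 0 < P) (kj : ℤ)
    (hlam : -Complex.I * lam * (P : ℂ) = (kj : ℂ)) :
    expFourierCoeff P
        (fun t => (∑ m ∈ Finset.range (n + 1), γ m * (t : ℂ) ^ m)
          * Complex.exp (2 * (Real.pi : ℂ) * lam * (t : ℂ))) kj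
      = ∑ l ∈ Finset.range (n + 1), γ l * (P : ℂ) ^ l / ((l : ℂ) + 1)
    ∧ ∀ k : ℤ, k ≠ kj →
        expFourierCoeff P
            (fun t => (∑ m ∈ Finset.range (n + 1), γ m * (t : ℂ) ^ m)
              * Complex.exp (2 * (Real.pi : ℂ) * lam * (t : ℂ))) k
          = ∑ l ∈ Finset.range n,
              (-((Nat.factorial l : ℂ) / (2 * (Real.pi : ℂ) * Complex.I) ^ (l + 1))
                  * ∑ m ∈ Finset.Icc (l + 1) n,
                      (P : ℂ) ^ m * (Nat.choose m l : ℂ) * γ m)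
                / ((k : ℂ) - (kj : ℂ)) ^ (l + 1) := by
  have hPc : (P : ℂ) ≠ 0 := ofReal_ne_zero.mpr hP.ne'
  refine ⟨?_, fun k hk => ?_⟩
  · rw [expFourierCoeff_poly_mul_exp n γ hP.ne' hlam, mul_sum]
    refine Finset.sum_congr rfl fun m _ => ?_
    simp only [sub_self, mul_zero, zero_div, neg_zero, zero_mul, exp_zero, mul_one,
      integral_ofReal_pow]
    field_simp
    ring
  · rw [expFourierCoeff_poly_mul_exp n γ hP.ne' hlam]
    set d : ℂ := 2 * π * I * (k - kj) / P with hd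
    have hdP : d * P = 2 * π * I * (k - kj) := div_mul_cancel₀ _ hPc
    have hd0 : d ≠ 0 := by simp [hd, hPc, Real.pi_ne_zero, sub_eq_zero, hk]
    have hexp : exp (-d * P) = 1 := by
      rw [neg_mul, hdP, ← exp_int_mul_two_pi_mul_I (kj - k)]
      push_cast
      ring_nf
    simp_rw [integral_pow_mul_exp_of_exp_eq_one hd0 hexp, neg_div, sum_div, ← sum_neg_distrib,
      mul_sum, sum_range_sum_range_eq_sum_sum_Icc, sum_div]
    refine Finset.sum_congr rfl fun ℓ _ => Finset.sum_congr rfl fun m hm => ?_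
    trans -(γ m * (summand d m ℓ P / d / P))
    · ring
    · rw [summand_div_div hPc (Nat.le_of_succ_le (mem_Icc.mp hm).1), hdP, mul_pow, ← div_div]
      ring
end
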